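/- Let g be a graphon with e(g) = e such that the two-dimensional Lebesgue measure of { (x,y) ∈ [0,1]² : g(x,y) = 0 } is at least 1/2 (in particular e ≤ 1/2). Then I(g) ≥ I₀(2e)/2. -/

import Mathlib

open MeasureTheory Real Set Filter

noncomputable section

/-- `I₀(u) = (1/2)[u ln u + (1-u) ln(1-u)]`, with the convention `log 0 = 0`
    giving `I₀(0) = I₀(1) = 0`. -/
def I0 (u : ℝ) : ℝ := (u * Real.log u + (1 - u) * Real.log (1 - u)) / 2

/-- `I₀'(u) = (1/2)[ln u − ln(1−u)]`. -/
def I0d (u : ℝ) : ℝ := (Real.log u - Real.log (1 - u)) / 2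

/-- `I₀''(u) = (1/2)[1/u + 1/(1−u)]`. -/
def I0dd (u : ℝ) : ℝ := (1 / u + 1 / (1 - u)) / 2

/-- A graphon: a measurable, symmetric function `[0,1]² → [0,1]`
    (here defined on all of `ℝ²`, with values used only on `[0,1]²`). -/
def IsGraphon (g : ℝ → ℝ → ℝ) : Prop :=
  Measurable (Function.uncurry g) ∧ (∀ x y, g x y = g y x) ∧ ∀ x y, g x y ∈ Icc (0 : ℝ) 1

/-- The edge density `e(g) = ∫₀¹∫₀¹ g(x,y) dx dy`. -/
def edgeDensity (g : ℝ → ℝ → ℝ) : ℝ :=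
  ∫ x in Icc (0 : ℝ) 1, ∫ y in Icc (0 : ℝ) 1, g x y

/-- The triangle density `t(g) = ∫₀¹∫₀¹∫₀¹ g(x,y) g(y,z) g(z,x) dx dy dz`. -/
def triangleDensity (g : ℝ → ℝ → ℝ) : ℝ :=
  ∫ x in Icc (0 : ℝ) 1, ∫ y in Icc (0 : ℝ) 1, ∫ z in Icc (0 : ℝ) 1, g x y * g y z * g z x

/-- The rate function `I(g) = ∫₀¹∫₀¹ I₀(g(x,y)) dx dy`. -/
def rate (g : ℝ → ℝ → ℝ) : ℝ :=
  ∫ x in Icc (0 : ℝ) 1, ∫ y in Icc (0 : ℝ) 1, I0 (g x y)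

/-- Lebesgue measure restricted to `[0,1]`. -/
def unitMeasure : Measure ℝ := volume.restrict (Icc (0 : ℝ) 1)

/-- Two graphons are equivalent if they agree a.e. after composing with
    measure-preserving maps of `[0,1]`. -/
def GraphonEquiv (f g : ℝ → ℝ → ℝ) : Prop :=
  ∃ σ σ' : ℝ → ℝ, MeasurePreserving σ unitMeasure unitMeasure ∧
    MeasurePreserving σ' unitMeasure unitMeasure ∧
    ∀ᵐ p ∂(unitMeasure.prod unitMeasure), f (σ p.1) (σ p.2) = g (σ' p.1) (σ' p.2)

end

/-!
Let `S` be the complement of the zero set of `g` in the unit square, of measure `s ≤ 1/2`; both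
`e(g)` and `I(g)` are integrals over `S`, since `I₀ 0 = 0`. Jensen's inequality for the convex
function `I₀ = -binEntropy / 2` on `S` gives `s I₀(e/s) ≤ I(g)`, and convexity together with
`I₀ 0 = 0` gives `I₀(t u) ≤ t I₀(u)` for `t = 2s ≤ 1`. Hence `I₀(2e) ≤ 2s I₀(e/s) ≤ 2 I(g)`.
-/

theorem ConvexOn.map_smul_le_smul_of_map_zero {E : Type*} [AddCommGroup E] [Module ℝ E]
    {s : Set E} {φ : E → ℝ} (hφ : ConvexOn ℝ s φ) (hφ0 : φ 0 = 0) (h0 : (0 : E) ∈ s) {x : E}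
    (hx : x ∈ s) {t : ℝ} (ht : t ∈ Icc (0 : ℝ) 1) : φ (t • x) ≤ t * φ x := by
  simpa [hφ0] using hφ.2 hx h0 ht.1 (sub_nonneg.2 ht.2) (add_sub_cancel t 1)

/-- Jensen's inequality on `S`, followed by `φ (t • m) ≤ t * φ m` to pass from the mass `μ S` to
the larger mass `c`. -/
theorem ConvexOn.mul_map_integral_div_le_integral {α : Type*} [MeasurableSpace α]
    {μ : Measure α} {φ : ℝ → ℝ} {f : α → ℝ} {S : Set α} (hφ : ConvexOn ℝ (Icc 0 1) φ)
    (hφc : ContinuousOn φ (Icc 0 1)) (hφ0 : φ 0 = 0) (hf : Integrable f μ)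
    (hφf : Integrable (φ ∘ f) μ) (hf01 : ∀ᵐ x ∂μ, f x ∈ Icc 0 1) (hfS : ∀ x ∉ S, f x = 0)
    {c : ℝ} (hSc : μ S ≤ ENNReal.ofReal c) :
    c * φ ((∫ x, f x ∂μ) / c) ≤ ∫ x, φ (f x) ∂μ := by
  have hfS' : ∫ x in S, f x ∂μ = ∫ x, f x ∂μ := setIntegral_eq_integral_of_forall_compl_eq_zero hfS
  have hφfS : ∫ x in S, φ (f x) ∂μ = ∫ x, φ (f x) ∂μ :=
    setIntegral_eq_integral_of_forall_compl_eq_zero fun x hx => by rw [hfS x hx, hφ0]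
  rw [← hfS', ← hφfS]
  have hS : μ S ≠ ⊤ := ne_top_of_le_ne_top ENNReal.ofReal_ne_top hSc
  rcases eq_or_ne (μ S) 0 with hS0 | hS0
  · simp [Measure.restrict_eq_zero.2 hS0, hφ0]
  have hs : 0 < μ.real S := ENNReal.toReal_pos hS0 hS
  have hc : 0 < c := ENNReal.ofReal_pos.1 ((pos_iff_ne_zero.2 hS0).trans_le hSc)
  have hsc : μ.real S ≤ c := ENNReal.toReal_le_of_le_ofReal hc.le hSc
  obtain ⟨hm, hjensen⟩ := hφ.set_average_mem_epigraph hφc isClosed_Icc hS0 hS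
    (ae_restrict_of_ae hf01) hf.integrableOn hφf.integrableOn
  set m := ⨍ x in S, f x ∂μ
  have ht : μ.real S / c ∈ Icc (0 : ℝ) 1 := ⟨by positivity, div_le_one_of_le₀ hsc (by linarith)⟩
  calc c * φ ((∫ x in S, f x ∂μ) / c)
      = c * φ ((μ.real S / c) • m) := by
        rw [← measure_smul_setAverage f hS, smul_eq_mul, smul_eq_mul, div_mul_eq_mul_div]
    _ ≤ c * ((μ.real S / c) * φ m) := by
        gcongr; exact hφ.map_smul_le_smul_of_map_zero hφ0 ⟨le_rfl, zero_le_one⟩ hm ht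
    _ = μ.real S * φ m := by field_simp
    _ ≤ μ.real S * ⨍ x in S, φ (f x) ∂μ := by gcongr
    _ = ∫ x in S, φ (f x) ∂μ := measure_smul_setAverage _ hS

theorem I0_eq_neg_binEntropy (u : ℝ) : I0 u = -binEntropy u / 2 := by
  simp only [I0, binEntropy, Real.log_inv]
  ring

theorem continuous_I0 : Continuous I0 := by
  rw [funext I0_eq_neg_binEntropy]
  fun_prop

theorem convexOn_I0 : ConvexOn ℝ (Icc 0 1) I0 := by
  refine (strictConcave_binEntropy.concaveOn.neg.smul (by norm_num : (0 : ℝ) ≤ 1 / 2)).congr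
    fun u _ => ?_
  simp only [I0_eq_neg_binEntropy, Pi.neg_apply, smul_eq_mul]
  ring

theorem I0_zero : I0 0 = 0 := by simp [I0]

theorem abs_I0_le {u : ℝ} (hu : u ∈ Icc (0 : ℝ) 1) : |I0 u| ≤ log 2 / 2 := by
  rw [I0_eq_neg_binEntropy, abs_div, abs_neg, abs_of_nonneg (binEntropy_nonneg hu.1 hu.2),
    abs_two]
  gcongr
  exact binEntropy_le_log_two

theorem volume_unitSquare : volume (Icc (0 : ℝ) 1 ×ˢ Icc (0 : ℝ) 1) = 1 := by
  rw [Measure.volume_eq_prod, Measure.prod_prod]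
  simp

/-- if a graphon with edge density `e` vanishes on a set of
    measure at least `1/2`, then `I(g) ≥ I₀(2e)/2`. -/
theorem rate_lower_bound_of_large_zero_set (e : ℝ) (g : ℝ → ℝ → ℝ) (hg : IsGraphon g)
    (hge : edgeDensity g = e)
    (hzero : (1 / 2 : ENNReal) ≤
      volume {q : ℝ × ℝ | q ∈ Icc (0 : ℝ) 1 ×ˢ Icc (0 : ℝ) 1 ∧ g q.1 q.2 = 0}) :
    rate g ≥ I0 (2 * e) / 2 := by
  obtain ⟨hmeas, -, hmem⟩ := hg
  set μ := volume.restrict (Icc (0 : ℝ) 1 ×ˢ Icc (0 : ℝ) 1)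
  have : IsProbabilityMeasure μ := ⟨by rw [Measure.restrict_apply_univ, volume_unitSquare]⟩
  have hZ : MeasurableSet {q : ℝ × ℝ | g q.1 q.2 = 0} := hmeas (measurableSet_singleton 0)
  have hS : μ {q | g q.1 q.2 = 0}ᶜ ≤ ENNReal.ofReal (1 / 2) := by
    rw [prob_compl_eq_one_sub hZ, Measure.restrict_apply hZ, inter_comm]
    calc 1 - volume _ ≤ 1 - 1 / 2 := tsub_le_tsub_left hzero 1
      _ = ENNReal.ofReal (1 / 2) := by
        rw [ENNReal.ofReal_div_of_pos two_pos]; simp [ENNReal.one_sub_inv_two]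
  have hG : Integrable (fun q : ℝ × ℝ => g q.1 q.2) μ :=
    .of_bound hmeas.aestronglyMeasurable 1 (ae_of_all _ fun q =>
      abs_le.2 ⟨by linarith [(hmem q.1 q.2).1], (hmem q.1 q.2).2⟩)
  have hF : Integrable (I0 ∘ fun q : ℝ × ℝ => g q.1 q.2) μ :=
    .of_bound (continuous_I0.measurable.comp hmeas).aestronglyMeasurable (log 2 / 2)
      (ae_of_all _ fun q => abs_I0_le (hmem q.1 q.2))
  have key := convexOn_I0.mul_map_integral_div_le_integral continuous_I0.continuousOn I0_zero
    hG hF (ae_of_all _ fun q => hmem q.1 q.2) (fun q hq => not_not.1 hq) hS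
  have hedge : edgeDensity g = ∫ q, g q.1 q.2 ∂μ := (setIntegral_prod _ hG).symm
  have hrate : rate g = ∫ q, I0 (g q.1 q.2) ∂μ := (setIntegral_prod _ hF).symm
  rw [hrate, ← hge, hedge, ge_iff_le]
  convert key using 1
  ring_nf
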